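/- arXiv:2204.11640 — 6 statements merged into one kernel-verified Lean document; each statement's English description precedes it below -/
import Mathlib

section
/- One-iteration sufficient decrease of HCISTA (the key inequality in the proof of Theorem 1). Let λ > 0, δ ∈ (1/4, 1/2), and t with 1/(4δ‖A‖₂²) ≤ t ≤ 1/‖A‖₂². Let x, u ∈ ℝ^N, v = S_{λt}(x − t∇f(x)) and w = S_{λt}(u − t∇f(u)); assume v ≠ x, and let α ∈ ℝ satisfy ‖u − x‖₂²/(‖u − x‖₂² + (1 − 2tδ‖A‖₂²)‖v − x‖₂²) ≤ α < 1. Then the next iterate x⁺ = αv + (1 − α)w satisfies F_λ(x) − F_λ(x⁺) ≥ δ‖A‖₂²·‖x⁺ − x‖₂². -/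
/-- The Euclidean (ℓ²) norm on `Fin n → ℝ`. -/
noncomputable def l2norm {n : ℕ} (x : Fin n → ℝ) : ℝ := Real.sqrt (∑ i, (x i) ^ 2)

/-- The ℓ¹ norm on `Fin n → ℝ`. -/
noncomputable def l1norm {n : ℕ} (x : Fin n → ℝ) : ℝ := ∑ i, |x i|

/-- The operator norm ‖A‖₂ of a matrix with respect to Euclidean norms. -/
noncomputable def opNorm {m n : ℕ} (A : Matrix (Fin m) (Fin n) ℝ) : ℝ :=
  sSup {c : ℝ | ∃ x : Fin n → ℝ, l2norm x ≤ 1 ∧ c = l2norm (A.mulVec x)}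

/-- Componentwise soft-thresholding: `S_θ(z)ᵢ = sgn(zᵢ) * max (|zᵢ| - θ) 0`. -/
noncomputable def soft {n : ℕ} (θ : ℝ) (z : Fin n → ℝ) : Fin n → ℝ :=
  fun i => Real.sign (z i) * max (|z i| - θ) 0

/-- Gradient of `f(x) = (1/2)‖Ax - b‖₂²`, namely `Aᵀ(Ax - b)`. -/
def gradf {m n : ℕ} (A : Matrix (Fin m) (Fin n) ℝ) (b : Fin m → ℝ) (x : Fin n → ℝ) :
    Fin n → ℝ :=
  A.transpose.mulVec (A.mulVec x - b)

/-- The Lasso objective `F_λ(x) = (1/2)‖Ax - b‖₂² + λ‖x‖₁`. -/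
noncomputable def Flasso {m n : ℕ} (A : Matrix (Fin m) (Fin n) ℝ) (b : Fin m → ℝ)
    (lam : ℝ) (x : Fin n → ℝ) : ℝ :=
  (1 / 2) * (l2norm (A.mulVec x - b)) ^ 2 + lam * l1norm x

/-- `s` is a subgradient of the convex function `φ` at the point `z`:
`φ(y) ≥ φ(z) + ⟨s, y - z⟩` for all `y`. -/
def IsSubgradient {n : ℕ} (φ : (Fin n → ℝ) → ℝ) (s z : Fin n → ℝ) : Prop :=
  ∀ y : Fin n → ℝ, φ z + ∑ i, s i * (y i - z i) ≤ φ y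

/- ======================= auxiliary lemmas ======================= -/

lemma l2norm_nonneg' {n : ℕ} (x : Fin n → ℝ) : 0 ≤ l2norm x := Real.sqrt_nonneg _

lemma l2norm_sq {n : ℕ} (x : Fin n → ℝ) : (l2norm x) ^ 2 = ∑ i, (x i) ^ 2 :=
  Real.sq_sqrt (Finset.sum_nonneg fun i _ => sq_nonneg _)

lemma l2norm_zero' {n : ℕ} : l2norm (0 : Fin n → ℝ) = 0 := by
  unfold l2norm; simp

lemma l2norm_smul' {n : ℕ} (a : ℝ) (x : Fin n → ℝ) : l2norm (a • x) = |a| * l2norm x := by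
  unfold l2norm
  rw [← Real.sqrt_sq_eq_abs, ← Real.sqrt_mul (sq_nonneg a), Finset.mul_sum]
  congr 1
  exact Finset.sum_congr rfl fun i _ => by
    simp only [Pi.smul_apply, smul_eq_mul]; ring

lemma opNorm_bddAbove {m n : ℕ} (A : Matrix (Fin m) (Fin n) ℝ) :
    BddAbove {c : ℝ | ∃ x : Fin n → ℝ, l2norm x ≤ 1 ∧ c = l2norm (A.mulVec x)} := by
  refine ⟨Real.sqrt (∑ i, ∑ j, (A i j) ^ 2), ?_⟩
  rintro c ⟨x, hx, rfl⟩
  unfold l2norm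
  apply Real.sqrt_le_sqrt
  have hx2 : ∑ j, (x j) ^ 2 ≤ 1 := by
    have h1 := l2norm_sq x
    nlinarith [l2norm_nonneg' x]
  calc ∑ i, (A.mulVec x i) ^ 2
      ≤ ∑ i, (∑ j, (A i j) ^ 2) * (∑ j, (x j) ^ 2) := by
        refine Finset.sum_le_sum fun i _ => ?_
        have hmv : A.mulVec x i = ∑ j, A i j * x j := by
          simp [Matrix.mulVec, dotProduct]
        rw [hmv]
        exact Finset.sum_mul_sq_le_sq_mul_sq _ _ _
    _ ≤ ∑ i, ∑ j, (A i j) ^ 2 := by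
        refine Finset.sum_le_sum fun i _ => ?_
        have h0 : 0 ≤ ∑ j, (A i j) ^ 2 := Finset.sum_nonneg fun j _ => sq_nonneg _
        nlinarith

lemma opNorm_mulVec_le {m n : ℕ} (A : Matrix (Fin m) (Fin n) ℝ) (z : Fin n → ℝ) :
    l2norm (A.mulVec z) ≤ opNorm A * l2norm z := by
  rcases eq_or_ne z 0 with rfl | hz
  · rw [Matrix.mulVec_zero, l2norm_zero', l2norm_zero', mul_zero]
  · have hnz : 0 < l2norm z := by
      rcases (l2norm_nonneg' z).lt_or_eq with h | h
      · exact h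
      · exfalso; apply hz
        have hs : ∑ i, (z i) ^ 2 = 0 := by
          have h2 := l2norm_sq z
          rw [← h] at h2
          simpa using h2.symm
        funext i
        have h3 := (Finset.sum_eq_zero_iff_of_nonneg (fun j _ => sq_nonneg (z j))).mp hs i
          (Finset.mem_univ i)
        have h4 : z i = 0 := by nlinarith [sq_nonneg (z i)]
        simpa using h4
    have hmem : l2norm (A.mulVec ((l2norm z)⁻¹ • z)) ∈
        {c : ℝ | ∃ x : Fin n → ℝ, l2norm x ≤ 1 ∧ c = l2norm (A.mulVec x)} := by
      refine ⟨(l2norm z)⁻¹ • z, ?_, rfl⟩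
      rw [l2norm_smul', abs_of_nonneg (inv_nonneg.mpr hnz.le), inv_mul_cancel₀ hnz.ne']
    have hle := le_csSup (opNorm_bddAbove A) hmem
    rw [Matrix.mulVec_smul, l2norm_smul', abs_of_nonneg (inv_nonneg.mpr hnz.le)] at hle
    have h1 : l2norm (A.mulVec z) = l2norm z * ((l2norm z)⁻¹ * l2norm (A.mulVec z)) := by
      field_simp
    rw [h1, mul_comm (opNorm A) (l2norm z)]
    exact mul_le_mul_of_nonneg_left hle hnz.le

lemma opNorm_nonneg' {m n : ℕ} (A : Matrix (Fin m) (Fin n) ℝ) : 0 ≤ opNorm A := by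
  have hmem : l2norm (A.mulVec (0 : Fin n → ℝ)) ∈
      {c : ℝ | ∃ x : Fin n → ℝ, l2norm x ≤ 1 ∧ c = l2norm (A.mulVec x)} :=
    ⟨0, by rw [l2norm_zero']; norm_num, rfl⟩
  exact le_trans (l2norm_nonneg' _) (le_csSup (opNorm_bddAbove A) hmem)

lemma opNorm_mulVec_sq_le {m n : ℕ} (A : Matrix (Fin m) (Fin n) ℝ) (z : Fin n → ℝ) :
    ∑ i, (A.mulVec z i) ^ 2 ≤ (opNorm A) ^ 2 * ∑ j, (z j) ^ 2 := by
  have h := opNorm_mulVec_le A z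
  have h2 : (l2norm (A.mulVec z)) ^ 2 ≤ (opNorm A * l2norm z) ^ 2 :=
    pow_le_pow_left₀ (l2norm_nonneg' _) h 2
  rw [mul_pow, l2norm_sq, l2norm_sq] at h2
  exact h2

lemma opNorm_pos {m n : ℕ} (A : Matrix (Fin m) (Fin n) ℝ) (hA : A ≠ 0) : 0 < opNorm A := by
  obtain ⟨i0, j0, hij⟩ : ∃ i j, A i j ≠ 0 := by
    by_contra h; push_neg at h
    exact hA (by ext i j; simpa using h i j)
  have hcol : A.mulVec (Pi.single j0 (1 : ℝ)) i0 = A i0 j0 := by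
    simp [Matrix.mulVec, dotProduct, Pi.single_apply, mul_ite]
  have hb := opNorm_mulVec_le A (Pi.single j0 (1 : ℝ))
  have h1 : l2norm (Pi.single j0 (1 : ℝ)) = 1 := by
    unfold l2norm
    have hs : ∑ i, ((Pi.single j0 1 : Fin n → ℝ) i) ^ 2 = 1 := by
      rw [Finset.sum_eq_single j0]
      · simp
      · intro c _ hc; simp [Pi.single_eq_of_ne hc]
      · intro h; exact absurd (Finset.mem_univ _) h
    rw [hs, Real.sqrt_one]
  have h2 : |A i0 j0| ≤ l2norm (A.mulVec (Pi.single j0 (1 : ℝ))) := by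
    unfold l2norm
    calc |A i0 j0| = Real.sqrt ((A i0 j0) ^ 2) := (Real.sqrt_sq_eq_abs _).symm
      _ ≤ _ := Real.sqrt_le_sqrt (by
          calc (A i0 j0) ^ 2 = (A.mulVec (Pi.single j0 (1 : ℝ)) i0) ^ 2 := by rw [hcol]
            _ ≤ ∑ i, (A.mulVec (Pi.single j0 (1 : ℝ)) i) ^ 2 :=
              Finset.single_le_sum (f := fun i => (A.mulVec (Pi.single j0 (1 : ℝ)) i) ^ 2)
                (fun i _ => sq_nonneg _) (Finset.mem_univ i0))
  rw [h1, mul_one] at hb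
  have h3 := abs_pos.mpr hij
  linarith

lemma soft_facts (θ z : ℝ) (hθ : 0 ≤ θ) :
    θ * |Real.sign z * max (|z| - θ) 0| =
      (z - Real.sign z * max (|z| - θ) 0) * (Real.sign z * max (|z| - θ) 0) ∧
    |z - Real.sign z * max (|z| - θ) 0| ≤ θ := by
  rcases lt_trichotomy z 0 with hz | rfl | hz
  · rw [Real.sign_of_neg hz]
    rcases le_or_gt (|z| - θ) 0 with h | h
    · rw [max_eq_right h]
      constructor
      · simp
      · have : |z| ≤ θ := by linarith
        simpa using this
    · rw [max_eq_left h.le]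
      have habs : |z| = -z := abs_of_neg hz
      rw [habs] at h ⊢
      constructor
      · rw [abs_of_nonpos (by nlinarith : (-1 : ℝ) * (-z - θ) ≤ 0)]; ring
      · rw [show z - (-1) * (-z - θ) = -θ by ring, abs_neg, abs_of_nonneg hθ]
  · constructor
    · simp
    · simpa [Real.sign_zero] using hθ
  · rw [Real.sign_of_pos hz]
    rcases le_or_gt (|z| - θ) 0 with h | h
    · rw [max_eq_right h]
      constructor
      · simp
      · have : |z| ≤ θ := by linarith
        simpa using this
    · rw [max_eq_left h.le]
      have habs : |z| = z := abs_of_pos hz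
      rw [habs] at h ⊢
      constructor
      · rw [one_mul, abs_of_nonneg (by linarith : (0 : ℝ) ≤ z - θ)]; ring
      · rw [one_mul, show z - (z - θ) = θ by ring, abs_of_nonneg hθ]

lemma soft1 (θ z y : ℝ) (hθ : 0 ≤ θ) :
    θ * |Real.sign z * max (|z| - θ) 0| +
      (z - Real.sign z * max (|z| - θ) 0) * (y - Real.sign z * max (|z| - θ) 0) ≤ θ * |y| := by
  obtain ⟨h1, h2⟩ := soft_facts θ z hθ
  set s := Real.sign z * max (|z| - θ) 0 with hs
  have key : θ * |s| + (z - s) * (y - s) = (z - s) * y := by rw [h1]; ring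
  rw [key]
  calc (z - s) * y ≤ |(z - s) * y| := le_abs_self _
    _ = |z - s| * |y| := abs_mul _ _
    _ ≤ θ * |y| := mul_le_mul_of_nonneg_right h2 (abs_nonneg y)

lemma soft_subgrad {n : ℕ} (θ : ℝ) (hθ : 0 ≤ θ) (z y : Fin n → ℝ) :
    θ * l1norm (soft θ z) + ∑ i, (z i - soft θ z i) * (y i - soft θ z i) ≤ θ * l1norm y := by
  simp only [l1norm, soft]
  rw [Finset.mul_sum, Finset.mul_sum, ← Finset.sum_add_distrib]
  exact Finset.sum_le_sum fun i _ => soft1 θ (z i) (y i) hθ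

lemma transpose_inner {m n : ℕ} (A : Matrix (Fin m) (Fin n) ℝ) (c : Fin m → ℝ)
    (d : Fin n → ℝ) :
    ∑ j, A.transpose.mulVec c j * d j = ∑ i, c i * A.mulVec d i := by
  simp only [Matrix.mulVec, dotProduct, Matrix.transpose_apply, Finset.sum_mul,
    Finset.mul_sum]
  rw [Finset.sum_comm]
  exact Finset.sum_congr rfl fun i _ => Finset.sum_congr rfl fun j _ => by ring

lemma gradf_inner {m n : ℕ} (A : Matrix (Fin m) (Fin n) ℝ) (b : Fin m → ℝ)
    (z d : Fin n → ℝ) :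
    ∑ j, gradf A b z j * d j = ∑ i, (A.mulVec z i - b i) * A.mulVec d i := by
  unfold gradf
  have h := transpose_inner A (A.mulVec z - b) d
  simp only [Pi.sub_apply] at h
  exact h

lemma f_expand {m n : ℕ} (A : Matrix (Fin m) (Fin n) ℝ) (b : Fin m → ℝ) (y z : Fin n → ℝ) :
    ∑ i, (A.mulVec y i - b i) ^ 2
      = ∑ i, (A.mulVec z i - b i) ^ 2 + 2 * ∑ j, gradf A b z j * (y j - z j)
        + ∑ i, (A.mulVec y i - A.mulVec z i) ^ 2 := by
  have h : ∑ j, gradf A b z j * (y j - z j)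
      = ∑ i, (A.mulVec z i - b i) * (A.mulVec y i - A.mulVec z i) := by
    have h0 := gradf_inner A b z (y - z)
    rw [Matrix.mulVec_sub] at h0
    simpa only [Pi.sub_apply] using h0
  rw [h, Finset.mul_sum, ← Finset.sum_add_distrib, ← Finset.sum_add_distrib]
  exact Finset.sum_congr rfl fun i _ => by ring

set_option maxHeartbeats 1600000 in
/-- One-iteration sufficient decrease of HCISTA (key inequality in the proof of Theorem 1). -/
theorem hcista_sufficient_decrease {M N : ℕ} (hM : 0 < M) (hN : 0 < N)
    (A : Matrix (Fin M) (Fin N) ℝ) (hA : A ≠ 0) (b : Fin M → ℝ)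
    (lam δ t : ℝ) (hlam : 0 < lam) (hδ1 : 1 / 4 < δ) (hδ2 : δ < 1 / 2)
    (ht1 : 1 / (4 * δ * (opNorm A) ^ 2) ≤ t) (ht2 : t ≤ 1 / (opNorm A) ^ 2)
    (x u v w xp : Fin N → ℝ)
    (hv : v = soft (lam * t) (x - t • gradf A b x))
    (hw : w = soft (lam * t) (u - t • gradf A b u))
    (hvx : v ≠ x) (α : ℝ)
    (hα1 : (l2norm (u - x)) ^ 2 /
      ((l2norm (u - x)) ^ 2 + (1 - 2 * t * δ * (opNorm A) ^ 2) * (l2norm (v - x)) ^ 2) ≤ α)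
    (hα2 : α < 1)
    (hxp : xp = α • v + (1 - α) • w) :
    Flasso A b lam x - Flasso A b lam xp ≥ δ * (opNorm A) ^ 2 * (l2norm (xp - x)) ^ 2 := by
  have hL : 0 < opNorm A := opNorm_pos A hA
  set L2 : ℝ := (opNorm A) ^ 2 with hL2def
  have hL2 : 0 < L2 := by positivity
  have hδ0 : 0 < δ := by linarith
  have ht0 : 0 < t := lt_of_lt_of_le (by positivity) ht1
  have htL : t * L2 ≤ 1 := (le_div_iff₀ hL2).mp ht2
  have hβ : 0 < 1 - α := by linarith
  have hm : 0 < 1 - 2 * t * δ * L2 := by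
    have h := mul_le_mul_of_nonneg_left htL (by linarith : (0 : ℝ) ≤ 2 * δ)
    nlinarith
  -- convert l2norms to sums
  have hsq : ∀ a c : Fin N → ℝ, (l2norm (a - c)) ^ 2 = ∑ i, (a i - c i) ^ 2 := by
    intro a c
    rw [l2norm_sq]
    exact Finset.sum_congr rfl fun i _ => by simp [Pi.sub_apply]
  rw [hsq u x, hsq v x] at hα1
  rw [hsq xp x]
  -- positivity of P2
  have hP2pos : 0 < ∑ i, (v i - x i) ^ 2 := by
    obtain ⟨i0, hi0⟩ : ∃ i, v i ≠ x i := by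
      by_contra h; push_neg at h; exact hvx (funext h)
    have h1 : 0 < (v i0 - x i0) ^ 2 := by
      have h2 : v i0 - x i0 ≠ 0 := sub_ne_zero.mpr hi0
      positivity
    calc (0 : ℝ) < (v i0 - x i0) ^ 2 := h1
      _ ≤ ∑ i, (v i - x i) ^ 2 :=
        Finset.single_le_sum (f := fun i => (v i - x i) ^ 2)
          (fun i _ => sq_nonneg _) (Finset.mem_univ i0)
  have hR2nn : 0 ≤ ∑ i, (u i - x i) ^ 2 := Finset.sum_nonneg fun i _ => sq_nonneg _
  have hH2nn : 0 ≤ ∑ i, (w i - x i) ^ 2 := Finset.sum_nonneg fun i _ => sq_nonneg _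
  have hden : 0 < (∑ i, (u i - x i) ^ 2) + (1 - 2 * t * δ * L2) * ∑ i, (v i - x i) ^ 2 := by
    have h := mul_pos hm hP2pos
    linarith
  have hα0 : 0 ≤ α := le_trans (div_nonneg hR2nn hden.le) hα1
  rw [div_le_iff₀ hden] at hα1
  have hαkey : (1 - α) * (∑ i, (u i - x i) ^ 2)
      ≤ α * ((1 - 2 * t * δ * L2) * ∑ i, (v i - x i) ^ 2) := by nlinarith [hα1]
  -- Flasso in sum form
  have hF : ∀ y : Fin N → ℝ, Flasso A b lam y
      = (1 / 2) * (∑ i, (A.mulVec y i - b i) ^ 2) + lam * l1norm y := by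
    intro y
    unfold Flasso
    rw [l2norm_sq]
    simp only [Pi.sub_apply]
  -- subgradient inequality at v (evaluated at x)
  have hsv := soft_subgrad (lam * t) (mul_nonneg hlam.le ht0.le) (x - t • gradf A b x) x
  rw [← hv] at hsv
  simp only [Pi.sub_apply, Pi.smul_apply, smul_eq_mul] at hsv
  have hsv' : lam * t * l1norm v + ((∑ i, (v i - x i) ^ 2)
      + t * ∑ i, gradf A b x i * (v i - x i)) ≤ lam * t * l1norm x := by
    have hsum : ∑ i, (x i - t * gradf A b x i - v i) * (x i - v i)
        = (∑ i, (v i - x i) ^ 2) + t * ∑ i, gradf A b x i * (v i - x i) := by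
      rw [Finset.mul_sum, ← Finset.sum_add_distrib]
      exact Finset.sum_congr rfl fun i _ => by ring
    rw [hsum] at hsv
    exact hsv
  -- subgradient inequality at w (evaluated at x)
  have hsw := soft_subgrad (lam * t) (mul_nonneg hlam.le ht0.le) (u - t • gradf A b u) x
  rw [← hw] at hsw
  simp only [Pi.sub_apply, Pi.smul_apply, smul_eq_mul] at hsw
  have hsw' : lam * t * l1norm w + ((∑ i, (u i - w i) * (x i - w i))
      - t * ∑ i, gradf A b u i * (x i - w i)) ≤ lam * t * l1norm x := by
    have hsum : ∑ i, (u i - t * gradf A b u i - w i) * (x i - w i)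
        = (∑ i, (u i - w i) * (x i - w i)) - t * ∑ i, gradf A b u i * (x i - w i) := by
      rw [Finset.mul_sum, ← Finset.sum_sub_distrib]
      exact Finset.sum_congr rfl fun i _ => by ring
    rw [hsum] at hsw
    exact hsw
  -- exact expansions of the quadratic part
  have hfv := f_expand A b v x
  have hfw := f_expand A b w u
  have hfx := f_expand A b x u
  -- curvature bounds
  have hQv : t * ∑ i, (A.mulVec v i - A.mulVec x i) ^ 2 ≤ ∑ i, (v i - x i) ^ 2 := by
    have h := opNorm_mulVec_sq_le A (v - x)
    rw [Matrix.mulVec_sub] at h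
    simp only [Pi.sub_apply] at h
    rw [← hL2def] at h
    have h2 := mul_le_mul_of_nonneg_left h ht0.le
    have h3 := mul_le_mul_of_nonneg_right htL
      (Finset.sum_nonneg fun i (_ : i ∈ Finset.univ) => sq_nonneg (v i - x i))
    linarith [h2, h3]
  have hQw : t * ∑ i, (A.mulVec w i - A.mulVec u i) ^ 2 ≤ ∑ i, (w i - u i) ^ 2 := by
    have h := opNorm_mulVec_sq_le A (w - u)
    rw [Matrix.mulVec_sub] at h
    simp only [Pi.sub_apply] at h
    rw [← hL2def] at h
    have h2 := mul_le_mul_of_nonneg_left h ht0.le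
    have h3 := mul_le_mul_of_nonneg_right htL
      (Finset.sum_nonneg fun i (_ : i ∈ Finset.univ) => sq_nonneg (w i - u i))
    linarith [h2, h3]
  have hQx : 0 ≤ ∑ i, (A.mulVec x i - A.mulVec u i) ^ 2 :=
    Finset.sum_nonneg fun i _ => sq_nonneg _
  -- gradient-sum cancellation
  have hgu : (∑ i, gradf A b u i * (w i - u i)) + ∑ i, gradf A b u i * (x i - w i)
      = ∑ i, gradf A b u i * (x i - u i) := by
    rw [← Finset.sum_add_distrib]
    exact Finset.sum_congr rfl fun i _ => by ring
  -- three-point quadratic identity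
  have hquad : (∑ i, (w i - u i) ^ 2) - 2 * ∑ i, (u i - w i) * (x i - w i)
      = (∑ i, (u i - x i) ^ 2) - ∑ i, (w i - x i) ^ 2 := by
    rw [Finset.mul_sum, ← Finset.sum_sub_distrib, ← Finset.sum_sub_distrib]
    exact Finset.sum_congr rfl fun i _ => by ring
  -- Step 2 : F(v) ≤ F(x) - P2/(2t)
  have hS2 : 2 * t * Flasso A b lam v ≤ 2 * t * Flasso A b lam x - ∑ i, (v i - x i) ^ 2 := by
    rw [hF v, hF x]
    have h1 : t * (∑ i, (A.mulVec v i - b i) ^ 2)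
        = t * (∑ i, (A.mulVec x i - b i) ^ 2)
          + 2 * (t * ∑ j, gradf A b x j * (v j - x j))
          + t * ∑ i, (A.mulVec v i - A.mulVec x i) ^ 2 := by
      rw [hfv]; ring
    linarith [hsv', hQv, h1]
  -- Step 3 : F(w) ≤ F(x) + (R2 - H2)/(2t)
  have hS3 : 2 * t * Flasso A b lam w ≤ 2 * t * Flasso A b lam x
      + ((∑ i, (u i - x i) ^ 2) - ∑ i, (w i - x i) ^ 2) := by
    rw [hF w, hF x]
    have h1 : t * (∑ i, (A.mulVec w i - b i) ^ 2)
        = t * (∑ i, (A.mulVec u i - b i) ^ 2)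
          + 2 * (t * ∑ j, gradf A b u j * (w j - u j))
          + t * ∑ i, (A.mulVec w i - A.mulVec u i) ^ 2 := by
      rw [hfw]; ring
    have h2 : t * (∑ i, (A.mulVec x i - b i) ^ 2)
        = t * (∑ i, (A.mulVec u i - b i) ^ 2)
          + 2 * (t * ∑ j, gradf A b u j * (x j - u j))
          + t * ∑ i, (A.mulVec x i - A.mulVec u i) ^ 2 := by
      rw [hfx]; ring
    have hgu' : t * ((∑ i, gradf A b u i * (w i - u i)) + ∑ i, gradf A b u i * (x i - w i))
        = t * ∑ i, gradf A b u i * (x i - u i) := by rw [hgu]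
    linarith [hsw', hQw, h1, h2, hgu', hquad, mul_nonneg ht0.le hQx]
  -- Step 1 : convexity, F(xp) ≤ α F(v) + (1-α) F(w)
  have hl1 : l1norm xp ≤ α * l1norm v + (1 - α) * l1norm w := by
    simp only [l1norm]
    rw [Finset.mul_sum, Finset.mul_sum, ← Finset.sum_add_distrib]
    refine Finset.sum_le_sum fun i _ => ?_
    rw [hxp]
    simp only [Pi.add_apply, Pi.smul_apply, smul_eq_mul]
    calc |α * v i + (1 - α) * w i| ≤ |α * v i| + |(1 - α) * w i| := abs_add_le _ _
      _ = α * |v i| + (1 - α) * |w i| := by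
          rw [abs_mul, abs_mul, abs_of_nonneg hα0, abs_of_nonneg hβ.le]
  have hAxp : ∀ i, A.mulVec xp i = α * A.mulVec v i + (1 - α) * A.mulVec w i := by
    intro i
    rw [hxp, Matrix.mulVec_add, Matrix.mulVec_smul, Matrix.mulVec_smul]
    simp [Pi.add_apply, Pi.smul_apply, smul_eq_mul]
  have hfxp : ∑ i, (A.mulVec xp i - b i) ^ 2
      ≤ α * (∑ i, (A.mulVec v i - b i) ^ 2) + (1 - α) * ∑ i, (A.mulVec w i - b i) ^ 2 := by
    rw [Finset.mul_sum, Finset.mul_sum, ← Finset.sum_add_distrib]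
    refine Finset.sum_le_sum fun i _ => ?_
    rw [hAxp i]
    nlinarith [mul_nonneg (mul_nonneg hα0 hβ.le) (sq_nonneg (A.mulVec v i - A.mulVec w i))]
  have hS1 : Flasso A b lam xp ≤ α * Flasso A b lam v + (1 - α) * Flasso A b lam w := by
    rw [hF xp, hF v, hF w]
    linarith [hfxp, mul_le_mul_of_nonneg_left hl1 hlam.le]
  -- Step 5 : ‖xp - x‖² ≤ α P2 + (1-α) H2
  have hD2 : ∑ i, (xp i - x i) ^ 2
      ≤ α * (∑ i, (v i - x i) ^ 2) + (1 - α) * ∑ i, (w i - x i) ^ 2 := by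
    rw [Finset.mul_sum, Finset.mul_sum, ← Finset.sum_add_distrib]
    refine Finset.sum_le_sum fun i _ => ?_
    have hxpi : xp i = α * v i + (1 - α) * w i := by
      rw [hxp]; simp [Pi.add_apply, Pi.smul_apply, smul_eq_mul]
    rw [hxpi]
    nlinarith [mul_nonneg (mul_nonneg hα0 hβ.le) (sq_nonneg (v i - w i))]
  -- final combination
  have hD2nn : 0 ≤ ∑ i, (xp i - x i) ^ 2 := Finset.sum_nonneg fun i _ => sq_nonneg _
  have hmH : 0 ≤ (1 - α) * ((1 - 2 * t * δ * L2) * ∑ i, (w i - x i) ^ 2) :=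
    mul_nonneg hβ.le (mul_nonneg hm.le hH2nn)
  have hfin : 2 * t * (δ * L2 * ∑ i, (xp i - x i) ^ 2)
      ≤ 2 * t * (Flasso A b lam x - Flasso A b lam xp) := by
    have hA1 : 2 * t * Flasso A b lam xp
        ≤ 2 * t * (α * Flasso A b lam v + (1 - α) * Flasso A b lam w) :=
      mul_le_mul_of_nonneg_left hS1 (by positivity)
    have hA2 : α * (2 * t * Flasso A b lam v)
        ≤ α * (2 * t * Flasso A b lam x - ∑ i, (v i - x i) ^ 2) :=
      mul_le_mul_of_nonneg_left hS2 hα0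
    have hA3 : (1 - α) * (2 * t * Flasso A b lam w)
        ≤ (1 - α) * (2 * t * Flasso A b lam x
          + ((∑ i, (u i - x i) ^ 2) - ∑ i, (w i - x i) ^ 2)) :=
      mul_le_mul_of_nonneg_left hS3 hβ.le
    have hA4 : (2 * t * (δ * L2)) * (∑ i, (xp i - x i) ^ 2)
        ≤ (2 * t * (δ * L2)) * (α * (∑ i, (v i - x i) ^ 2)
          + (1 - α) * ∑ i, (w i - x i) ^ 2) :=
      mul_le_mul_of_nonneg_left hD2 (by positivity)
    linarith [hA1, hA2, hA3, hA4, hαkey, hmH]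
  have hfin2 := le_of_mul_le_mul_left
    (by linarith [hfin] : (2 * t) * (δ * L2 * ∑ i, (xp i - x i) ^ 2)
      ≤ (2 * t) * (Flasso A b lam x - Flasso A b lam xp)) (by linarith : (0 : ℝ) < 2 * t)
  linarith [hfin2]
end

section
/- Lemma 2 (the iterate increment controls both proximal steps). Let λ > 0, 0 < t ≤ 1/‖A‖₂², x, u ∈ ℝ^N, v = S_{λt}(x − t∇f(x)), w = S_{λt}(u − t∇f(u)), α ∈ (0, 1), and x⁺ = αv + (1 − α)w. Assume v ≠ x and set η = ‖u − x‖₂/‖v − x‖₂. Then for all real constants a > 0 and b > 0, writing c = 2a(1 − α) + 2bα, one has (a − ηc)·‖v − x‖₂ + b·‖w − x‖₂ ≤ (a + b)·‖x⁺ − x‖₂. -/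
/-!
The forward–backward map `y ↦ S_θ(y - t∇f(y))` is nonexpansive: soft-thresholding is
`id - projIcc (-θ) θ` with the projection monotone and 1-Lipschitz, and the gradient step
`y ↦ y - t AᵀA y` is nonexpansive as soon as `t‖A‖² ≤ 1`. Hence `‖w - v‖ ≤ ‖u - x‖ = η‖v - x‖`,
and the two triangle inequalities through `x⁺`, which lies on the segment `[w, v]`, give
`a‖v - x‖ + b‖w - x‖ ≤ (a + b)‖x⁺ - x‖ + (a(1 - α) + bα)‖w - v‖`.
-/

open Matrix
open scoped Matrix.Norms.L2Operator InnerProductSpace InnerProduct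

theorem ContinuousLinearMap.norm_sub_smul_adjoint_apply_le {E F : Type*}
    [NormedAddCommGroup E] [InnerProductSpace ℝ E] [CompleteSpace E]
    [NormedAddCommGroup F] [InnerProductSpace ℝ F] [CompleteSpace F]
    (T : E →L[ℝ] F) {t : ℝ} (ht : 0 ≤ t) (htT : t * ‖T‖ ^ 2 ≤ 1) (y : E) :
    ‖y - t • (T†) (T y)‖ ≤ ‖y‖ := by
  have hinner : ⟪y, (T†) (T y)⟫_ℝ = ‖T y‖ ^ 2 := by
    rw [ContinuousLinearMap.adjoint_inner_right, real_inner_self_eq_norm_sq]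
  have hadj : ‖(T†) (T y)‖ ≤ ‖T‖ * ‖T y‖ := by
    simpa only [LinearIsometryEquiv.norm_map] using (T†).le_opNorm (T y)
  have hsq : ‖(T†) (T y)‖ ^ 2 ≤ ‖T‖ ^ 2 * ‖T y‖ ^ 2 := by
    rw [← mul_pow]; exact pow_le_pow_left₀ (norm_nonneg _) hadj 2
  refine pow_le_pow_iff_left₀ (norm_nonneg _) (norm_nonneg _) two_ne_zero |>.mp ?_
  rw [norm_sub_sq_real, inner_smul_right, norm_smul, Real.norm_of_nonneg ht, hinner, mul_pow]
  nlinarith [mul_le_mul_of_nonneg_left hsq (sq_nonneg t), mul_nonneg ht (sq_nonneg ‖T y‖)]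

lemma abs_sub_sub_sub_le_of_monotone_of_abs_sub_le {f : ℝ → ℝ} (hmono : Monotone f)
    (hlip : ∀ a b, |f a - f b| ≤ |a - b|) (a b : ℝ) :
    |(a - f a) - (b - f b)| ≤ |a - b| := by
  wlog hba : b ≤ a generalizing a b
  · rw [abs_sub_comm, abs_sub_comm a]; exact this b a (le_of_not_ge hba)
  have h₁ : f b ≤ f a := hmono hba
  have h₂ := hlip a b
  rw [abs_of_nonneg (sub_nonneg.mpr hba), abs_le] at *
  constructor <;> linarith

lemma mul_norm_sub_add_mul_norm_sub_le_of_convex_combination {E : Type*}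
    [SeminormedAddCommGroup E] [NormedSpace ℝ E] (v w x : E) {α a b : ℝ}
    (hα₀ : 0 ≤ α) (hα₁ : α ≤ 1) (ha : 0 ≤ a) (hb : 0 ≤ b) :
    a * ‖v - x‖ + b * ‖w - x‖ ≤
      (a + b) * ‖α • v + (1 - α) • w - x‖ + (a * (1 - α) + b * α) * ‖w - v‖ := by
  set r := ‖α • v + (1 - α) • w - x‖
  have hv : ‖v - x‖ ≤ r + (1 - α) * ‖w - v‖ := by
    have h : v - x = (α • v + (1 - α) • w - x) - (1 - α) • (w - v) := by module
    rw [h, ← norm_smul_of_nonneg (sub_nonneg.mpr hα₁)]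
    exact norm_sub_le _ _
  have hw : ‖w - x‖ ≤ r + α * ‖w - v‖ := by
    have h : w - x = (α • v + (1 - α) • w - x) + α • (w - v) := by module
    rw [h, ← norm_smul_of_nonneg hα₀]
    exact norm_add_le _ _
  nlinarith [mul_le_mul_of_nonneg_left hv ha, mul_le_mul_of_nonneg_left hw hb]

lemma l2norm_eq_norm {n : ℕ} (x : Fin n → ℝ) : l2norm x = ‖WithLp.toLp 2 x‖ := by
  simp [l2norm, EuclideanSpace.norm_eq, sq_abs]

lemma opNorm_eq_l2_opNorm {m n : ℕ} (A : Matrix (Fin m) (Fin n) ℝ) : opNorm A = ‖A‖ := by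
  rw [Matrix.l2_opNorm_def, ← ContinuousLinearMap.sSup_unitClosedBall_eq_norm, opNorm]
  congr 1
  ext c
  simp only [Set.mem_ofPred_eq, Set.mem_image, Metric.mem_closedBall, dist_zero_right]
  constructor
  · rintro ⟨x, hx, rfl⟩
    exact ⟨WithLp.toLp 2 x, by rwa [← l2norm_eq_norm], by rw [l2norm_eq_norm]; rfl⟩
  · rintro ⟨y, hy, rfl⟩
    exact ⟨y.ofLp, by rwa [l2norm_eq_norm], by rw [l2norm_eq_norm]; rfl⟩

lemma gradf_sub_gradf {m n : ℕ} (A : Matrix (Fin m) (Fin n) ℝ) (b : Fin m → ℝ)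
    (u x : Fin n → ℝ) : gradf A b u - gradf A b x = Aᵀ *ᵥ (A *ᵥ (u - x)) := by
  simp only [gradf, Matrix.mulVec_sub]; abel

lemma l2norm_sub_smul_transpose_mulVec_mulVec_le {m n : ℕ} (A : Matrix (Fin m) (Fin n) ℝ)
    {t : ℝ} (ht : 0 ≤ t) (htA : t * opNorm A ^ 2 ≤ 1) (y : Fin n → ℝ) :
    l2norm (y - t • Aᵀ *ᵥ (A *ᵥ y)) ≤ l2norm y := by
  set T := (Matrix.toEuclideanLin.trans LinearMap.toContinuousLinearMap) A
  have hT : (T†) (T (WithLp.toLp 2 y)) = WithLp.toLp 2 (Aᵀ *ᵥ (A *ᵥ y)) := by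
    have hadj : T† = (Matrix.toEuclideanLin Aᴴ).toContinuousLinearMap := by
      rw [Matrix.toEuclideanLin_conjTranspose_eq_adjoint, LinearMap.adjoint_toContinuousLinearMap]
      rfl
    rw [hadj, Matrix.conjTranspose_eq_transpose_of_trivial]
    rfl
  rw [l2norm_eq_norm, l2norm_eq_norm, WithLp.toLp_sub, WithLp.toLp_smul, ← hT]
  rw [opNorm_eq_l2_opNorm, Matrix.l2_opNorm_def] at htA
  exact T.norm_sub_smul_adjoint_apply_le ht htA _

lemma l2norm_forwardStep_sub_le {m n : ℕ} (A : Matrix (Fin m) (Fin n) ℝ) (b : Fin m → ℝ)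
    {t : ℝ} (ht : 0 ≤ t) (htA : t * opNorm A ^ 2 ≤ 1) (u x : Fin n → ℝ) :
    l2norm ((u - t • gradf A b u) - (x - t • gradf A b x)) ≤ l2norm (u - x) := by
  have h : (u - t • gradf A b u) - (x - t • gradf A b x) =
      (u - x) - t • (gradf A b u - gradf A b x) := by
    module
  rw [h, gradf_sub_gradf]
  exact l2norm_sub_smul_transpose_mulVec_mulVec_le A ht htA _

lemma sign_mul_max_abs_sub_eq {θ : ℝ} (hθ : 0 ≤ θ) (a : ℝ) :
    Real.sign a * max (|a| - θ) 0 = a - Set.projIcc (-θ) θ (by linarith) a := by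
  rw [Set.coe_projIcc]
  rcases lt_trichotomy a 0 with ha | rfl | ha
  · rw [Real.sign_of_neg ha, abs_of_neg ha, min_eq_right (by linarith)]
    rcases le_total a (-θ) with h | h
    · rw [max_eq_left (by linarith), max_eq_left h]; ring
    · rw [max_eq_right (by linarith), max_eq_right h]; ring
  · simp [hθ]
  · rw [Real.sign_of_pos ha, abs_of_pos ha]
    rcases le_total a θ with h | h
    · rw [min_eq_right h, max_eq_right (by linarith), max_eq_right (by linarith)]; ring
    · rw [min_eq_left h, max_eq_left (by linarith), max_eq_right (by linarith)]; ring

lemma l2norm_soft_sub_soft_le {n : ℕ} {θ : ℝ} (hθ : 0 ≤ θ) (z z' : Fin n → ℝ) :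
    l2norm (soft θ z - soft θ z') ≤ l2norm (z - z') := by
  refine Real.sqrt_le_sqrt (Finset.sum_le_sum fun i _ => sq_le_sq.mpr ?_)
  simp only [Pi.sub_apply, soft, sign_mul_max_abs_sub_eq hθ]
  exact abs_sub_sub_sub_le_of_monotone_of_abs_sub_le
    (fun _ _ h => Subtype.coe_le_coe.mpr (Set.monotone_projIcc _ h))
    (fun _ _ => Set.abs_projIcc_sub_projIcc _) _ _

theorem hcista_lemma2_general {M N : ℕ}
    (A : Matrix (Fin M) (Fin N) ℝ) (b : Fin M → ℝ)
    (lam t : ℝ) (hlam : 0 < lam) (ht : 0 < t) (ht' : t ≤ 1 / (opNorm A) ^ 2)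
    (x u v w xp : Fin N → ℝ) (α : ℝ) (hα1 : 0 < α) (hα2 : α < 1)
    (hv : v = soft (lam * t) (x - t • gradf A b x))
    (hw : w = soft (lam * t) (u - t • gradf A b u))
    (hxp : xp = α • v + (1 - α) • w)
    (hvx : v ≠ x) (η : ℝ) (hη : η = l2norm (u - x) / l2norm (v - x)) :
    ∀ a b' : ℝ, 0 < a → 0 < b' →
      (a - η * (2 * a * (1 - α) + 2 * b' * α)) * l2norm (v - x) + b' * l2norm (w - x) ≤
        (a + b') * l2norm (xp - x) := by
  intro a b' ha hb'
  have htA : t * opNorm A ^ 2 ≤ 1 := by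
    rcases (sq_nonneg (opNorm A)).eq_or_lt with h | h
    · simp [← h]
    · rwa [le_div_iff₀ h] at ht'
  have hwv : l2norm (w - v) ≤ η * l2norm (v - x) := by
    have hp : 0 < l2norm (v - x) := by
      rw [l2norm_eq_norm, WithLp.toLp_sub]
      exact norm_pos_iff.mpr (sub_ne_zero.mpr ((WithLp.toLp_injective 2).ne hvx))
    rw [hη, div_mul_cancel₀ _ hp.ne', hv, hw]
    exact (l2norm_soft_sub_soft_le (mul_pos hlam ht).le _ _).trans
      (l2norm_forwardStep_sub_le A b ht.le htA u x)
  have key := mul_norm_sub_add_mul_norm_sub_le_of_convex_combination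
    (WithLp.toLp 2 v) (WithLp.toLp 2 w) (WithLp.toLp 2 x) hα1.le hα2.le ha.le hb'.le
  simp only [← WithLp.toLp_sub, ← WithLp.toLp_smul, ← WithLp.toLp_add, ← l2norm_eq_norm,
    ← hxp] at key
  have hc : 0 ≤ a * (1 - α) + b' * α := by nlinarith
  have hη₀ : 0 ≤ η * l2norm (v - x) := (Real.sqrt_nonneg _).trans hwv
  linarith [mul_le_mul_of_nonneg_left hwv hc, mul_nonneg hc hη₀]

/-- Lemma 2: the iterate increment controls both proximal steps. -/
theorem hcista_lemma2 {M N : ℕ} (hM : 0 < M) (hN : 0 < N)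
    (A : Matrix (Fin M) (Fin N) ℝ) (hA : A ≠ 0) (b : Fin M → ℝ)
    (lam t : ℝ) (hlam : 0 < lam) (ht : 0 < t) (ht' : t ≤ 1 / (opNorm A) ^ 2)
    (x u v w xp : Fin N → ℝ) (α : ℝ) (hα1 : 0 < α) (hα2 : α < 1)
    (hv : v = soft (lam * t) (x - t • gradf A b x))
    (hw : w = soft (lam * t) (u - t • gradf A b u))
    (hxp : xp = α • v + (1 - α) • w)
    (hvx : v ≠ x) (η : ℝ) (hη : η = l2norm (u - x) / l2norm (v - x)) :
    ∀ a b' : ℝ, 0 < a → 0 < b' →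
      (a - η * (2 * a * (1 - α) + 2 * b' * α)) * l2norm (v - x) + b' * l2norm (w - x) ≤
        (a + b') * l2norm (xp - x) :=
  hcista_lemma2_general A b lam t hlam ht ht' x u v w xp α hα1 hα2 hv hw hxp hvx η hη
end

section
/- Rate recursion underlying Theorem 3, case θ ∈ [1/2, 1) (linear convergence of the even/odd subsequences). Let θ ∈ [1/2, 1), P > 0, k ∈ ℕ, and let r : ℕ → ℝ be non-increasing with 0 < rⁿ ≤ 1 for all n ≥ k. Assume that 1 ≤ P·(rⁿ⁺¹)^{2θ−2}·(rⁿ⁻¹ − rⁿ⁺¹) for every n ≥ k + 1. Then rⁿ⁺¹ ≤ (P/(1 + P))·rⁿ⁻¹ for every n ≥ k + 1, and consequently r^{k+1+2l} ≤ (P/(1 + P))^l · r^{k+1} for every l ∈ ℕ. -/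
/-- Rate recursion underlying Theorem 3, case θ ∈ [1/2, 1): linear convergence of the
even/odd subsequences. Powers with real exponents are `Real.rpow`. -/
theorem kl_linear_rate (θ P : ℝ) (hθ1 : 1 / 2 ≤ θ) (hθ2 : θ < 1) (hP : 0 < P)
    (k : ℕ) (r : ℕ → ℝ)
    (hmono : ∀ m n : ℕ, m ≤ n → r n ≤ r m)
    (hpos : ∀ n, k ≤ n → 0 < r n) (hle1 : ∀ n, k ≤ n → r n ≤ 1)
    (hrec : ∀ n, k + 1 ≤ n → 1 ≤ P * r (n + 1) ^ (2 * θ - 2) * (r (n - 1) - r (n + 1))) :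
    (∀ n, k + 1 ≤ n → r (n + 1) ≤ (P / (1 + P)) * r (n - 1)) ∧
    ∀ l : ℕ, r (k + 1 + 2 * l) ≤ (P / (1 + P)) ^ l * r (k + 1) := by
  have hc : (0:ℝ) < 1 + P := by linarith
  have key : ∀ n, k + 1 ≤ n → r (n + 1) ≤ (P / (1 + P)) * r (n - 1) := by
    intro n hn
    have hx : 0 < r (n + 1) := hpos _ (by omega)
    have hx1 : r (n + 1) ≤ 1 := hle1 _ (by omega)
    have h := hrec n hn
    have hpow : r (n + 1) ^ (2 * θ - 2) = (r (n + 1) ^ (2 - 2 * θ))⁻¹ := by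
      rw [← Real.rpow_neg hx.le]
      ring_nf
    have hppos : 0 < r (n + 1) ^ (2 - 2 * θ) := Real.rpow_pos_of_pos hx _
    have h2 : r (n + 1) ^ (2 - 2 * θ) ≤ P * (r (n - 1) - r (n + 1)) := by
      rw [hpow] at h
      have h' := mul_le_mul_of_nonneg_left h hppos.le
      calc r (n + 1) ^ (2 - 2 * θ)
          = r (n + 1) ^ (2 - 2 * θ) * 1 := by ring
        _ ≤ r (n + 1) ^ (2 - 2 * θ) *
            (P * (r (n + 1) ^ (2 - 2 * θ))⁻¹ * (r (n - 1) - r (n + 1))) := h'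
        _ = P * (r (n - 1) - r (n + 1)) := by
            field_simp
    have h3 : r (n + 1) ≤ r (n + 1) ^ (2 - 2 * θ) := by
      have := Real.rpow_le_rpow_of_exponent_ge hx hx1 (show 2 - 2 * θ ≤ 1 by linarith)
      rwa [Real.rpow_one] at this
    have h4 : r (n + 1) ≤ P * (r (n - 1) - r (n + 1)) := le_trans h3 h2
    rw [div_mul_eq_mul_div, le_div_iff₀ hc]
    nlinarith
  refine ⟨key, ?_⟩
  intro l
  induction l with
  | zero => simp
  | succ l ih =>
    have hn : k + 1 ≤ k + 2 + 2 * l := by omega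
    have h := key (k + 2 + 2 * l) hn
    have e1 : k + 2 + 2 * l + 1 = k + 1 + 2 * (l + 1) := by ring
    have e2 : k + 2 + 2 * l - 1 = k + 1 + 2 * l := by omega
    rw [e1, e2] at h
    have hcnn : (0:ℝ) ≤ P / (1 + P) := by positivity
    calc r (k + 1 + 2 * (l + 1)) ≤ (P / (1 + P)) * r (k + 1 + 2 * l) := h
      _ ≤ (P / (1 + P)) * ((P / (1 + P)) ^ l * r (k + 1)) :=
          mul_le_mul_of_nonneg_left ih hcnn
      _ = (P / (1 + P)) ^ (l + 1) * r (k + 1) := by ring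
end

section
/- Rate recursion underlying Theorem 3, case θ ∈ (0, 1/2) (sublinear convergence rate). Let θ ∈ (0, 1/2), C > 0, P > 0, and k ≥ 1 an integer, and let r : ℕ → ℝ be non-increasing with rⁿ > 0 for all n. Assume that 1 ≤ P·(rⁿ⁺¹)^{2θ−2}·(rⁿ⁻¹ − rⁿ⁺¹) for every n ≥ k. Then, setting C_r = min{ C/(2P), (C/(1 − 2θ))·(2^{(2θ−1)/(2θ−2)} − 1)·(r⁰)^{2θ−1} }, one has for every n > k: rⁿ ≤ [ 2C / ((n − k)·C_r·(1 − 2θ)) ]^{1/(1−2θ)}. -/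
open Real

/-- Bernoulli-type tangent line inequality for negative exponents `p ∈ [-1,0]`
on `(0,1]`. -/
lemma kl_rpow_tangent_neg {x p : ℝ} (hx0 : 0 < x) (hx1 : x ≤ 1)
    (hp1 : -1 ≤ p) (hp0 : p ≤ 0) :
    1 + p * (x - 1) ≤ x ^ p := by
  have hs : -1 ≤ x - 1 := by linarith
  have h1 : x ^ (-p) ≤ 1 + (-p) * (x - 1) := by
    have h := rpow_one_add_le_one_add_mul_self hs
      (by linarith : (0:ℝ) ≤ -p) (by linarith : -p ≤ 1)
    simpa using h
  have hxp : 0 < x ^ (-p) := rpow_pos_of_pos hx0 _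
  have h2 : 0 < 1 + (-p) * (x - 1) := lt_of_lt_of_le hxp h1
  have h3 : x ^ p = (x ^ (-p))⁻¹ := by
    rw [← rpow_neg hx0.le, neg_neg]
  have h4 : (1 + (-p) * (x - 1))⁻¹ ≤ (x ^ (-p))⁻¹ :=
    inv_anti₀ hxp h1
  have h5 : 1 + p * (x - 1) ≤ (1 + (-p) * (x - 1))⁻¹ := by
    rw [inv_eq_one_div, le_div_iff₀ h2]
    nlinarith [sq_nonneg (p * (x - 1))]
  rw [h3]
  exact h5.trans h4
  
set_option maxHeartbeats 1000000 in
/-- Auxiliary chain lemma: lower bound on `r n ^ p` from the two-step recursion. -/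
lemma kl_aux (p Pc D : ℝ) (hpm1 : -1 < p) (hp0 : p < 0) (hPc : 0 < Pc)
    (k : ℕ) (hk : 1 ≤ k) (r : ℕ → ℝ)
    (hmono : ∀ m n : ℕ, m ≤ n → r n ≤ r m) (hpos : ∀ n, 0 < r n)
    (hrec : ∀ n, k ≤ n → 1 ≤ Pc * r (n + 1) ^ (p - 1) * (r (n - 1) - r (n + 1)))
    (hD1 : D ≤ (-p) / (2 * Pc))
    (hD2 : D ≤ ((2:ℝ) ^ (p / (p - 1)) - 1) * r 0 ^ p) :
    ∀ n : ℕ, k < n → (((n - k + 1) / 2 : ℕ) : ℝ) * D ≤ r n ^ p := by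
  have hq0 : p - 1 < 0 := by linarith
  have hstep : ∀ i : ℕ, k ≤ i → r (i - 1) ^ p + D ≤ r (i + 1) ^ p := by
    intro i hi
    set a := r (i + 1) with ha'
    set b := r (i - 1) with hb'
    have ha : 0 < a := hpos _
    have hb : 0 < b := hpos _
    have hab : a ≤ b := hmono (i - 1) (i + 1) (by omega)
    have hrec' : 1 ≤ Pc * a ^ (p - 1) * (b - a) := hrec i hi
    have hap : 0 < a ^ (p - 1) := rpow_pos_of_pos ha _
    have hbp : 0 < b ^ (p - 1) := rpow_pos_of_pos hb _
    have hbP : 0 < b ^ p := rpow_pos_of_pos hb _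
    -- tangent line inequality
    have hx0 : 0 < a / b := div_pos ha hb
    have hx1 : a / b ≤ 1 := (div_le_one hb).mpr hab
    have htan0 := kl_rpow_tangent_neg hx0 hx1 hpm1.le hp0.le
    have hd : (a / b) ^ p = a ^ p / b ^ p := div_rpow ha.le hb.le _
    have hbsub : b ^ (p - 1) = b ^ p / b := rpow_sub_one hb.ne' p
    have htan : (-p) * (b ^ (p - 1) * (b - a)) ≤ a ^ p - b ^ p := by
      have h2 := mul_le_mul_of_nonneg_left htan0 hbP.le
      rw [hd, mul_div_cancel₀ _ hbP.ne'] at h2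
      have e : b ^ p * (1 + p * (a / b - 1)) =
          b ^ p + (-p) * (b ^ (p - 1) * (b - a)) := by
        rw [hbsub]; field_simp; ring
      rw [e] at h2
      linarith
    rcases le_or_gt (a ^ (p - 1)) (2 * b ^ (p - 1)) with hcase | hcase
    · -- case 1 : use the recursion quantitatively
      have h1 : (-p) / (2 * Pc) ≤ (-p) * (b ^ (p - 1) * (b - a)) := by
        have hba : 0 ≤ b - a := by linarith
        have h2 : 1 / Pc ≤ a ^ (p - 1) * (b - a) := by
          rw [div_le_iff₀ hPc]
          nlinarith
        have h3 : a ^ (p - 1) * (b - a) ≤ 2 * (b ^ (p - 1) * (b - a)) := by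
          nlinarith
        have h6 : 1 ≤ Pc * (2 * (b ^ (p - 1) * (b - a))) := by
          have := mul_le_mul_of_nonneg_left h3 hPc.le
          nlinarith
        rw [div_le_iff₀ (by positivity : (0:ℝ) < 2 * Pc)]
        nlinarith [mul_le_mul_of_nonneg_left h6 (by linarith : (0:ℝ) ≤ -p)]
      have : D ≤ a ^ p - b ^ p := le_trans (hD1.trans h1) htan
      linarith
    · -- case 2 : geometric decrease
      have h2 : (2:ℝ) < (a / b) ^ (p - 1) := by
        rw [div_rpow ha.le hb.le, lt_div_iff₀ hbp]
        linarith
      have hexp : 0 < p / (p - 1) :=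
        div_pos_iff.mpr (Or.inr ⟨hp0, hq0⟩)
      have h3 : (2:ℝ) ^ (p / (p - 1)) ≤ ((a / b) ^ (p - 1)) ^ (p / (p - 1)) :=
        rpow_le_rpow (by norm_num) h2.le hexp.le
      have h4 : ((a / b) ^ (p - 1)) ^ (p / (p - 1)) = (a / b) ^ p := by
        rw [← rpow_mul hx0.le]
        congr 1
        rw [mul_comm]
        exact div_mul_cancel₀ p hq0.ne
      have h5 : (2:ℝ) ^ (p / (p - 1)) * b ^ p ≤ a ^ p := by
        have := mul_le_mul_of_nonneg_right (h4 ▸ h3) hbP.le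
        rwa [hd, div_mul_cancel₀ _ hbP.ne'] at this
      have h6 : r 0 ^ p ≤ b ^ p :=
        rpow_le_rpow_of_nonpos hb (hmono 0 (i - 1) (Nat.zero_le _)) hp0.le
      have h7 : (1:ℝ) ≤ (2:ℝ) ^ (p / (p - 1)) := by
        apply one_le_rpow (by norm_num) hexp.le
      have : D ≤ a ^ p - b ^ p := by
        calc D ≤ ((2:ℝ) ^ (p / (p - 1)) - 1) * r 0 ^ p := hD2
          _ ≤ ((2:ℝ) ^ (p / (p - 1)) - 1) * b ^ p := by
              apply mul_le_mul_of_nonneg_left h6 (by linarith)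
          _ ≤ a ^ p - b ^ p := by
              have he : ((2:ℝ) ^ (p / (p - 1)) - 1) * b ^ p =
                  (2:ℝ) ^ (p / (p - 1)) * b ^ p - b ^ p := by ring
              linarith [h5]
      linarith
  intro n
  induction n using Nat.strong_induction_on with
  | _ n ih =>
    intro hn
    have hn2 : 2 ≤ n := by omega
    have hst : r (n - 2) ^ p + D ≤ r n ^ p := by
      have h := hstep (n - 1) (by omega)
      have e1 : n - 1 + 1 = n := by omega
      have e2 : n - 1 - 1 = n - 2 := by omega
      rw [e1, e2] at h
      exact h
    by_cases hc : n ≤ k + 2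
    · have he : (n - k + 1) / 2 = 1 := by omega
      rw [he]
      have hp2 := (rpow_pos_of_pos (hpos (n - 2)) p).le
      push_cast
      linarith
    · have ih2 := ih (n - 2) (by omega) (by omega)
      have harith : (n - k + 1) / 2 = (n - 2 - k + 1) / 2 + 1 := by omega
      rw [harith]
      push_cast
      linarith

/-- Rate recursion underlying Theorem 3, case θ ∈ (0, 1/2): sublinear convergence rate.
Powers with real exponents are `Real.rpow`. -/
theorem kl_sublinear_rate (θ C P : ℝ) (hθ1 : 0 < θ) (hθ2 : θ < 1 / 2)
    (hC : 0 < C) (hP : 0 < P) (k : ℕ) (hk : 1 ≤ k) (r : ℕ → ℝ)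
    (hmono : ∀ m n : ℕ, m ≤ n → r n ≤ r m) (hpos : ∀ n, 0 < r n)
    (hrec : ∀ n, k ≤ n → 1 ≤ P * r (n + 1) ^ (2 * θ - 2) * (r (n - 1) - r (n + 1)))
    (Cr : ℝ)
    (hCr : Cr = min (C / (2 * P))
      ((C / (1 - 2 * θ)) * ((2 : ℝ) ^ ((2 * θ - 1) / (2 * θ - 2)) - 1) * r 0 ^ (2 * θ - 1))) :
    ∀ n : ℕ, k < n →
      r n ≤ (2 * C / (((n : ℝ) - (k : ℝ)) * Cr * (1 - 2 * θ))) ^ (1 / (1 - 2 * θ)) := by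
  have h2θ : 0 < 1 - 2 * θ := by linarith
  have hpm1 : (-1:ℝ) < 2 * θ - 1 := by linarith
  have hp0 : (2:ℝ) * θ - 1 < 0 := by linarith
  have hq : (2:ℝ) * θ - 1 - 1 = 2 * θ - 2 := by ring
  have hexp : 0 < (2 * θ - 1) / (2 * θ - 2) :=
    div_pos_iff.mpr (Or.inr ⟨by linarith, by linarith⟩)
  have hE : (1:ℝ) < (2:ℝ) ^ ((2 * θ - 1) / (2 * θ - 2)) :=
    one_lt_rpow_iff_of_pos (by norm_num) |>.mpr (Or.inl ⟨by norm_num, hexp⟩)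
  have hr0 : 0 < r 0 ^ (2 * θ - 1) := rpow_pos_of_pos (hpos 0) _
  have hCrpos : 0 < Cr := by
    rw [hCr]
    apply lt_min (by positivity)
    have : 0 < C / (1 - 2 * θ) := by positivity
    have : 0 < (2:ℝ) ^ ((2 * θ - 1) / (2 * θ - 2)) - 1 := by linarith
    positivity
  set D : ℝ := Cr * (1 - 2 * θ) / C with hD
  have hDpos : 0 < D := by positivity
  have hCr1 : Cr ≤ C / (2 * P) := hCr ▸ min_le_left _ _
  have hCr2 : Cr ≤ (C / (1 - 2 * θ)) *
      ((2:ℝ) ^ ((2 * θ - 1) / (2 * θ - 2)) - 1) * r 0 ^ (2 * θ - 1) :=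
    hCr ▸ min_le_right _ _
  have hD1 : D ≤ (-(2 * θ - 1)) / (2 * P) := by
    rw [hD]
    have h1 : Cr * (2 * P) ≤ C := by
      rwa [← le_div_iff₀ (by positivity)]
    rw [div_le_div_iff₀ hC (by positivity)]
    nlinarith
  have hD2 : D ≤ ((2:ℝ) ^ ((2 * θ - 1) / (2 * θ - 1 - 1)) - 1) * r 0 ^ (2 * θ - 1) := by
    rw [hq, hD]
    have h1 : Cr * (1 - 2 * θ) / C ≤
        ((C / (1 - 2 * θ)) * ((2:ℝ) ^ ((2 * θ - 1) / (2 * θ - 2)) - 1) *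
          r 0 ^ (2 * θ - 1)) * (1 - 2 * θ) / C := by
      gcongr
    have h2 : ((C / (1 - 2 * θ)) * ((2:ℝ) ^ ((2 * θ - 1) / (2 * θ - 2)) - 1) *
        r 0 ^ (2 * θ - 1)) * (1 - 2 * θ) / C =
        ((2:ℝ) ^ ((2 * θ - 1) / (2 * θ - 2)) - 1) * r 0 ^ (2 * θ - 1) := by
      field_simp
    linarith [h1, h2.le, h2.ge]
  have hchain := kl_aux (2 * θ - 1) P D hpm1 hp0 hP k hk r hmono hpos
    (by intro n hn; rw [hq]; exact hrec n hn) hD1 hD2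
  intro n hn
  have hch := hchain n hn
  set N : ℕ := (n - k + 1) / 2 with hN
  have hnkN : (n - k : ℕ) ≤ 2 * N := by omega
  have hcast : ((n - k : ℕ) : ℝ) = (n : ℝ) - (k : ℝ) := by
    push_cast [Nat.cast_sub hn.le]
    ring
  set m : ℝ := (n : ℝ) - (k : ℝ) with hm
  have hmpos : 0 < m := by
    rw [hm]
    have : (k : ℝ) < n := by exact_mod_cast hn
    linarith
  have hmN : m ≤ 2 * (N : ℝ) := by
    rw [← hcast]
    exact_mod_cast hnkN
  have hlow : m * D / 2 ≤ r n ^ (2 * θ - 1) := by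
    have : m * D / 2 ≤ (N : ℝ) * D := by nlinarith
    linarith
  have hlowpos : 0 < m * D / 2 := by positivity
  have hXeq : 2 * C / (m * Cr * (1 - 2 * θ)) = (m * D / 2)⁻¹ := by
    rw [hD]
    field_simp
  have hrp : 0 < r n ^ (2 * θ - 1) := rpow_pos_of_pos (hpos n) _
  have hinv : r n ^ (1 - 2 * θ) ≤ 2 * C / (m * Cr * (1 - 2 * θ)) := by
    rw [hXeq]
    have e : r n ^ (1 - 2 * θ) = (r n ^ (2 * θ - 1))⁻¹ := by
      rw [← rpow_neg (hpos n).le]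
      norm_num
    rw [e]
    exact inv_anti₀ hlowpos hlow
  have hfinal := rpow_le_rpow (rpow_nonneg (hpos n).le _) hinv
    (by positivity : (0:ℝ) ≤ 1 / (1 - 2 * θ))
  have e2 : (r n ^ (1 - 2 * θ)) ^ (1 / (1 - 2 * θ)) = r n := by
    rw [← rpow_mul (hpos n).le, mul_one_div, div_self (by linarith : (1:ℝ) - 2*θ ≠ 0),
      rpow_one]
  rwa [e2] at hfinal
end

section
/- One-step 'no false positive' and ℓ¹ error bound for the HLISTA-CP gradient step (Eqs. (t8)–(t9) and (new5) in the proof of Theorem 4). Let S ⊆ {1, …, N}, let x* ∈ ℝ^N with supp(x*) ⊆ S, set b = A x*, and let x ∈ ℝ^N with supp(x) ⊆ S. Let W ∈ W_s(A), write μ = μ(A), let θ ≥ μ·‖x − x*‖₁, and set v = S_θ(x + Wᵀ(b − Ax)). Then vᵢ = 0 for every i ∉ S, and ‖v − x*‖₁ ≤ μ(|S| − 1)·‖x − x*‖₁ + |S|·θ. In particular, for θ = μ‖x − x*‖₁ one has ‖v − x*‖₁ ≤ μ(2|S| − 1)·‖x − x*‖₁. -/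
open scoped Classical

/-- `max_{i ≠ j} |WᵢᵀAⱼ|`, where `Wᵢ`, `Aⱼ` are columns. -/
noncomputable def mutualMax {m n : ℕ} (A W : Matrix (Fin m) (Fin n) ℝ) : ℝ :=
  sSup {c : ℝ | ∃ i j : Fin n, i ≠ j ∧ c = |∑ k, W k i * A k j|}

/-- Generalized mutual coherence `μ(A)`: the infimum of `max_{i≠j} |WᵢᵀAⱼ|` over all
matrices `W` with `WᵢᵀAᵢ = 1` for all `i`. -/
noncomputable def gmc {m n : ℕ} (A : Matrix (Fin m) (Fin n) ℝ) : ℝ :=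
  sInf {c : ℝ | ∃ W : Matrix (Fin m) (Fin n) ℝ,
    (∀ i, (∑ k, W k i * A k i) = 1) ∧ c = mutualMax A W}

/-- `W ∈ W_s(A)`: `WᵢᵀAᵢ = 1` for all `i`, and `W` attains the infimum defining `μ(A)`. -/
def memWs {m n : ℕ} (A W : Matrix (Fin m) (Fin n) ℝ) : Prop :=
  (∀ i, (∑ k, W k i * A k i) = 1) ∧ mutualMax A W = gmc A

lemma soft_scalar_zero {θ z : ℝ} (h : |z| ≤ θ) : Real.sign z * max (|z| - θ) 0 = 0 := by
  rw [max_eq_right (by linarith), mul_zero]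

lemma soft_scalar_close {θ z : ℝ} (hθ : 0 ≤ θ) : |Real.sign z * max (|z| - θ) 0 - z| ≤ θ := by
  rcases le_or_gt (|z|) θ with h | h
  · rw [soft_scalar_zero h, zero_sub, abs_neg]; exact h
  · rw [max_eq_left (by linarith)]
    rcases lt_trichotomy z 0 with h1 | h1 | h1
    · rw [Real.sign_of_neg h1, abs_of_neg h1]
      have heq : -1 * (-z - θ) - z = θ := by ring
      rw [heq, abs_of_nonneg hθ]
    · exfalso; rw [h1, abs_zero] at h; linarith
    · rw [Real.sign_of_pos h1, abs_of_pos h1]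
      have heq : 1 * (z - θ) - z = -θ := by ring
      rw [heq, abs_neg, abs_of_nonneg hθ]

lemma mutualMax_bdd {m n : ℕ} (A W : Matrix (Fin m) (Fin n) ℝ) :
    BddAbove {c : ℝ | ∃ i j : Fin n, i ≠ j ∧ c = |∑ k, W k i * A k j|} := by
  refine BddAbove.mono ?_
    (Set.finite_range (fun p : Fin n × Fin n => |∑ k, W k p.1 * A k p.2|)).bddAbove
  rintro c ⟨i, j, hij, rfl⟩
  exact ⟨(i, j), rfl⟩

lemma mutualMax_mem_le {m n : ℕ} (A W : Matrix (Fin m) (Fin n) ℝ) {i j : Fin n} (h : i ≠ j) :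
    |∑ k, W k i * A k j| ≤ mutualMax A W :=
  le_csSup (mutualMax_bdd A W) ⟨i, j, h, rfl⟩

lemma mutualMax_nonneg {m n : ℕ} (A W : Matrix (Fin m) (Fin n) ℝ) : 0 ≤ mutualMax A W := by
  rcases Set.eq_empty_or_nonempty
      {c : ℝ | ∃ i j : Fin n, i ≠ j ∧ c = |∑ k, W k i * A k j|} with h | hne
  · unfold mutualMax; rw [h, Real.sSup_empty]
  · obtain ⟨c, i, j, hij, hc⟩ := hne
    calc (0:ℝ) ≤ |∑ k, W k i * A k j| := abs_nonneg _
      _ ≤ mutualMax A W := mutualMax_mem_le A W hij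

/-- One-step 'no false positive' and ℓ¹ error bound for the HLISTA-CP gradient step
(Eqs. (t8)–(t9) and (new5) in the proof of Theorem 4). -/
theorem hlista_cp_gradstep {M N : ℕ} (hM : 0 < M) (hN : 0 < N)
    (A : Matrix (Fin M) (Fin N) ℝ)
    (hcols : ∀ j, l2norm (fun i => A i j) = 1)
    (S : Finset (Fin N)) (xstar : Fin N → ℝ)
    (hsupp : ∀ i, xstar i ≠ 0 → i ∈ S)
    (b : Fin M → ℝ) (hb : b = A.mulVec xstar)
    (x : Fin N → ℝ) (hx : ∀ i, x i ≠ 0 → i ∈ S)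
    (W : Matrix (Fin M) (Fin N) ℝ) (hW : memWs A W)
    (θ : ℝ) (hθ : gmc A * l1norm (x - xstar) ≤ θ)
    (v : Fin N → ℝ)
    (hv : v = soft θ (x + W.transpose.mulVec (b - A.mulVec x))) :
    (∀ i, i ∉ S → v i = 0) ∧
    l1norm (v - xstar) ≤
      gmc A * ((S.card : ℝ) - 1) * l1norm (x - xstar) + (S.card : ℝ) * θ ∧
    (θ = gmc A * l1norm (x - xstar) →
      l1norm (v - xstar) ≤ gmc A * (2 * (S.card : ℝ) - 1) * l1norm (x - xstar)) := by
  set z : Fin N → ℝ := x + W.transpose.mulVec (b - A.mulVec x) with hzdef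
  set y : Fin N → ℝ := fun j => xstar j - x j with hydef
  set L : ℝ := ∑ j, |y j| with hLdef
  have hμ : mutualMax A W = gmc A := hW.2
  have hμ0 : 0 ≤ gmc A := hμ ▸ mutualMax_nonneg A W
  have hL : l1norm (x - xstar) = L := by
    simp only [l1norm, hLdef, hydef, Pi.sub_apply]
    exact Finset.sum_congr rfl (fun j _ => abs_sub_comm _ _)
  have hL0 : 0 ≤ L := Finset.sum_nonneg (fun j _ => abs_nonneg _)
  have hθL : gmc A * L ≤ θ := by rw [← hL]; exact hθ
  have hθ0 : 0 ≤ θ := le_trans (mul_nonneg hμ0 hL0) hθL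
  -- expression for the pre-threshold vector
  have h1 : ∀ i, (W.transpose.mulVec (b - A.mulVec x)) i = ∑ j, (∑ k, W k i * A k j) * y j := by
    intro i
    simp only [Matrix.mulVec, Matrix.transpose_apply, dotProduct, hb, Pi.sub_apply]
    have hterm : ∀ k, W k i * ((∑ j, A k j * xstar j) - ∑ j, A k j * x j)
        = ∑ j, W k i * A k j * y j := by
      intro k
      rw [← Finset.sum_sub_distrib, Finset.mul_sum]
      refine Finset.sum_congr rfl (fun j _ => ?_)
      simp only [hydef]; ring
    rw [Finset.sum_congr rfl (fun k _ => hterm k), Finset.sum_comm]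
    exact Finset.sum_congr rfl (fun j _ => (Finset.sum_mul _ _ _).symm)
  have hz : ∀ i, z i = xstar i + ∑ j ∈ Finset.univ.erase i, (∑ k, W k i * A k j) * y j := by
    intro i
    have h2 : z i = x i + ∑ j, (∑ k, W k i * A k j) * y j := by
      simp only [hzdef, Pi.add_apply]; rw [h1 i]
    rw [h2, ← Finset.add_sum_erase Finset.univ _ (Finset.mem_univ i), hW.1 i, one_mul]
    simp only [hydef]; ring
  -- key estimate
  have hest : ∀ i, |z i - xstar i| ≤ gmc A * (L - |y i|) := by
    intro i
    rw [hz i, add_sub_cancel_left]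
    calc |∑ j ∈ Finset.univ.erase i, (∑ k, W k i * A k j) * y j|
        ≤ ∑ j ∈ Finset.univ.erase i, |(∑ k, W k i * A k j) * y j| :=
          Finset.abs_sum_le_sum_abs _ _
      _ ≤ ∑ j ∈ Finset.univ.erase i, gmc A * |y j| := by
          refine Finset.sum_le_sum (fun j hj => ?_)
          rw [abs_mul]
          exact mul_le_mul_of_nonneg_right
            (hμ ▸ mutualMax_mem_le A W (Finset.ne_of_mem_erase hj).symm) (abs_nonneg _)
      _ = gmc A * (L - |y i|) := by
          rw [← Finset.mul_sum]
          congr 1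
          have h3 := Finset.add_sum_erase Finset.univ (fun j => |y j|) (Finset.mem_univ i)
          simp only [hLdef]
          linarith
  have hxsoff : ∀ i, i ∉ S → xstar i = 0 := by
    intro i hi; by_contra h; exact hi (hsupp i h)
  have hyoff : ∀ i, i ∉ S → y i = 0 := by
    intro i hi
    have hxi : x i = 0 := by by_contra h; exact hi (hx i h)
    simp [hydef, hxi, hxsoff i hi]
  -- no false positives
  have part1 : ∀ i, i ∉ S → v i = 0 := by
    intro i hi
    have hzi : |z i| ≤ θ := by
      have h4 := hest i
      rw [hxsoff i hi, sub_zero] at h4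
      calc |z i| ≤ gmc A * (L - |y i|) := h4
        _ = gmc A * L := by rw [hyoff i hi, abs_zero, sub_zero]
        _ ≤ θ := hθL
    rw [hv]
    exact soft_scalar_zero hzi
  -- pointwise bound
  have hpt : ∀ i, |v i - xstar i| ≤ gmc A * (L - |y i|) + θ := by
    intro i
    calc |v i - xstar i| = |(v i - z i) + (z i - xstar i)| := by ring_nf
      _ ≤ |v i - z i| + |z i - xstar i| := abs_add_le _ _
      _ ≤ θ + gmc A * (L - |y i|) := by
          refine add_le_add ?_ (hest i)
          rw [hv]
          exact soft_scalar_close hθ0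
      _ = gmc A * (L - |y i|) + θ := by ring
  have hSy : ∑ i ∈ S, |y i| = L := by
    rw [hLdef]
    exact Finset.sum_subset (Finset.subset_univ S)
      (fun i _ hi => by rw [hyoff i hi, abs_zero])
  have hvsum : l1norm (v - xstar) = ∑ i ∈ S, |v i - xstar i| := by
    rw [l1norm]
    refine (Finset.sum_subset (Finset.subset_univ S) (fun i _ hi => ?_)).symm
    simp [part1 i hi, hxsoff i hi]
  have part2 : l1norm (v - xstar) ≤
      gmc A * ((S.card : ℝ) - 1) * l1norm (x - xstar) + (S.card : ℝ) * θ := by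
    rw [hvsum, hL]
    calc ∑ i ∈ S, |v i - xstar i| ≤ ∑ i ∈ S, (gmc A * (L - |y i|) + θ) :=
          Finset.sum_le_sum (fun i _ => hpt i)
      _ = gmc A * ((S.card : ℝ) - 1) * L + (S.card : ℝ) * θ := by
          rw [Finset.sum_add_distrib, Finset.sum_const, nsmul_eq_mul, ← Finset.mul_sum,
            Finset.sum_sub_distrib, Finset.sum_const, nsmul_eq_mul, hSy]
          ring
  refine ⟨part1, part2, fun hte => ?_⟩
  calc l1norm (v - xstar)
      ≤ gmc A * ((S.card : ℝ) - 1) * l1norm (x - xstar) + (S.card : ℝ) * θ := part2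
    _ = gmc A * (2 * (S.card : ℝ) - 1) * l1norm (x - xstar) := by rw [hte]; ring
end

section
/- One-step bound for the DNN-corrected HLISTA-CP step (Eqs. (es76)–(es77) and (new9) in the proof of Theorem 4, under the additional sparsity condition 2|S| ≤ N). Let S ⊆ {1, …, N} with |S| ≥ 2 and 2|S| ≤ N, let x* ∈ ℝ^N with supp(x*) ⊆ S, and set b = A x*. Let u ∈ ℝ^N be arbitrary, W ∈ W_s(A), μ = μ(A), θ₂ = μ·(‖u − x*‖₁ + ((N − |S|)/(|S| − 1))·‖u‖₁), and w = S_{θ₂}(u + Wᵀ(b − Au)). Then wᵢ = 0 for every i ∉ S, and ‖w − x*‖₁ ≤ μ(2|S| − 1)·(‖u − x*‖₁ + ((N − |S|)/(|S| − 1))·‖u‖₁). -/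
open scoped Classical

lemma soft_close (θ z : ℝ) (hθ : 0 ≤ θ) : |Real.sign z * max (|z| - θ) 0 - z| ≤ θ := by
  rcases lt_trichotomy z 0 with h | h | h
  · rw [Real.sign_of_neg h, abs_of_neg h]
    rcases max_cases (-z - θ) 0 with ⟨he, hle⟩ | ⟨he, hle⟩ <;> rw [he, abs_le] <;>
      constructor <;> nlinarith
  · simpa [h] using hθ
  · rw [Real.sign_of_pos h, abs_of_pos h]
    rcases max_cases (z - θ) 0 with ⟨he, hle⟩ | ⟨he, hle⟩ <;> rw [he, abs_le] <;>
      constructor <;> nlinarith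

lemma soft_zero (θ z : ℝ) (h : |z| ≤ θ) : Real.sign z * max (|z| - θ) 0 = 0 := by
  rw [max_eq_right (by linarith), mul_zero]

/-- One-step bound for the DNN-corrected HLISTA-CP step (Eqs. (es76)–(es77) and (new9)
in the proof of Theorem 4, under the additional sparsity condition 2|S| ≤ N). -/
theorem hlista_cp_dnnstep {M N : ℕ} (hM : 0 < M) (hN : 0 < N)
    (A : Matrix (Fin M) (Fin N) ℝ)
    (hcols : ∀ j, l2norm (fun i => A i j) = 1)
    (S : Finset (Fin N)) (hS2 : 2 ≤ S.card) (hSN : 2 * S.card ≤ N)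
    (xstar : Fin N → ℝ) (hsupp : ∀ i, xstar i ≠ 0 → i ∈ S)
    (b : Fin M → ℝ) (hb : b = A.mulVec xstar)
    (u : Fin N → ℝ)
    (W : Matrix (Fin M) (Fin N) ℝ) (hW : memWs A W)
    (θ₂ : ℝ)
    (hθ₂ : θ₂ = gmc A * (l1norm (u - xstar)
      + (((N : ℝ) - (S.card : ℝ)) / ((S.card : ℝ) - 1)) * l1norm u))
    (w : Fin N → ℝ)
    (hw : w = soft θ₂ (u + W.transpose.mulVec (b - A.mulVec u))) :
    (∀ i, i ∉ S → w i = 0) ∧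
    l1norm (w - xstar) ≤ gmc A * (2 * (S.card : ℝ) - 1) *
      (l1norm (u - xstar) + (((N : ℝ) - (S.card : ℝ)) / ((S.card : ℝ) - 1)) * l1norm u) := by
  have hNS : S.card ≤ N := le_trans (by omega) hSN
  have hs2 : (2 : ℝ) ≤ (S.card : ℝ) := by exact_mod_cast hS2
  have h2sN : 2 * (S.card : ℝ) ≤ (N : ℝ) := by exact_mod_cast hSN
  set μ := gmc A with hμdef
  set s : ℝ := (S.card : ℝ) with hsdef
  set c : ℝ := ((N : ℝ) - s) / (s - 1) with hcdef
  set U : ℝ := l1norm u with hUdef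
  -- coordinates
  set t : Fin N → ℝ := fun i => |u i - xstar i| with htdef
  have hD : l1norm (u - xstar) = ∑ i, t i := by
    simp [l1norm, htdef]
  set D : ℝ := ∑ i, t i with hDdef
  have hD0 : 0 ≤ D := Finset.sum_nonneg fun i _ => abs_nonneg _
  have hU0 : 0 ≤ U := Finset.sum_nonneg fun i _ => abs_nonneg _
  have hc0 : 0 ≤ c := div_nonneg (by linarith) (by linarith)
  -- off-diagonal bound
  have hfin : {cc : ℝ | ∃ i j : Fin N, i ≠ j ∧ cc = |∑ k, W k i * A k j|}.Finite := by
    apply Set.Finite.subset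
      (Set.finite_range (fun p : Fin N × Fin N => |∑ k, W k p.1 * A k p.2|))
    rintro cc ⟨i, j, _, rfl⟩
    exact ⟨(i, j), rfl⟩
  have hbdd : BddAbove {cc : ℝ | ∃ i j : Fin N, i ≠ j ∧ cc = |∑ k, W k i * A k j|} :=
    hfin.bddAbove
  have hoff : ∀ i j : Fin N, i ≠ j → |∑ k, W k i * A k j| ≤ μ := by
    intro i j hij
    have := le_csSup hbdd (by exact ⟨i, j, hij, rfl⟩ :
      |∑ k, W k i * A k j| ∈ {cc : ℝ | ∃ i j : Fin N, i ≠ j ∧ cc = |∑ k, W k i * A k j|})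
    exact this.trans_eq hW.2
  have hN2 : 1 < N := by omega
  have hμ0 : 0 ≤ μ := by
    have h01 : (⟨0, by omega⟩ : Fin N) ≠ ⟨1, hN2⟩ := by
      intro h; exact absurd (congrArg Fin.val h) (by simp)
    exact le_trans (abs_nonneg _) (hoff _ _ h01)
  have hθ₂0 : 0 ≤ θ₂ := by
    rw [hθ₂, hD]
    exact mul_nonneg hμ0 (by nlinarith [mul_nonneg hc0 hU0])
  -- the key pointwise estimate
  set v : Fin N → ℝ := u + W.transpose.mulVec (b - A.mulVec u) with hvdef
  have hVi : ∀ i, v i - xstar i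
      = ∑ j ∈ Finset.univ.erase i, (∑ k, W k i * A k j) * (xstar j - u j) := by
    intro i
    have h1 : v i = u i + ∑ j, (∑ k, W k i * A k j) * (xstar j - u j) := by
      simp only [hvdef, Pi.add_apply, Matrix.mulVec, Matrix.transpose_apply, Pi.sub_apply,
        hb, dotProduct]
      congr 1
      calc ∑ k, W k i * ((∑ j, A k j * xstar j) - ∑ j, A k j * u j)
          = ∑ k, ∑ j, W k i * A k j * (xstar j - u j) := by
            refine Finset.sum_congr rfl fun k _ => ?_
            rw [← Finset.sum_sub_distrib, Finset.mul_sum]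
            exact Finset.sum_congr rfl fun j _ => by ring
        _ = ∑ j, ∑ k, W k i * A k j * (xstar j - u j) := Finset.sum_comm
        _ = ∑ j, (∑ k, W k i * A k j) * (xstar j - u j) :=
            Finset.sum_congr rfl fun j _ => (Finset.sum_mul _ _ _).symm
    rw [h1, ← Finset.sum_erase_add Finset.univ _ (Finset.mem_univ i), hW.1 i]
    ring
  have hkey : ∀ i, |v i - xstar i| ≤ μ * (D - t i) := by
    intro i
    rw [hVi i]
    calc |∑ j ∈ Finset.univ.erase i, (∑ k, W k i * A k j) * (xstar j - u j)|
        ≤ ∑ j ∈ Finset.univ.erase i, |(∑ k, W k i * A k j) * (xstar j - u j)| :=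
          Finset.abs_sum_le_sum_abs _ _
      _ ≤ ∑ j ∈ Finset.univ.erase i, μ * t j := by
          refine Finset.sum_le_sum fun j hj => ?_
          rw [abs_mul]
          have hji : i ≠ j := (Finset.ne_of_mem_erase hj).symm
          have h2 : |xstar j - u j| = t j := by rw [htdef]; exact abs_sub_comm _ _
          rw [h2]
          exact mul_le_mul_of_nonneg_right (hoff i j hji) (abs_nonneg _)
      _ = μ * (D - t i) := by
          rw [← Finset.mul_sum, Finset.sum_erase_eq_sub (Finset.mem_univ i), ← hDdef]
  have hxS : ∀ i, i ∉ S → xstar i = 0 := by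
    intro i hi
    by_contra h
    exact hi (hsupp i h)
  -- part 1
  have part1 : ∀ i, i ∉ S → w i = 0 := by
    intro i hi
    rw [hw]
    show Real.sign (v i) * max (|v i| - θ₂) 0 = 0
    apply soft_zero
    have h1 : |v i| ≤ μ * (D - t i) := by
      have := hkey i
      rwa [hxS i hi, sub_zero] at this
    have h2 : μ * (D - t i) ≤ μ * D :=
      mul_le_mul_of_nonneg_left (by linarith [abs_nonneg (u i - xstar i)]) hμ0
    have h3 : μ * D ≤ θ₂ := by
      rw [hθ₂, hD]
      nlinarith [mul_nonneg (mul_nonneg hμ0 hc0) hU0]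
    linarith
  refine ⟨part1, ?_⟩
  -- part 2
  have hwv : ∀ i, |w i - v i| ≤ θ₂ := by
    intro i
    rw [hw]
    exact soft_close θ₂ (v i) hθ₂0
  set T : ℝ := ∑ i ∈ S, t i with hTdef
  have hTD : D - U ≤ T := by
    have hsplit : T + ∑ i ∈ Sᶜ, t i = D := Finset.sum_add_sum_compl S t
    have hcs : ∑ i ∈ Sᶜ, t i ≤ U := by
      have : ∀ i ∈ Sᶜ, t i = |u i| := by
        intro i hi
        simp [htdef, hxS i (Finset.mem_compl.mp hi)]
      rw [Finset.sum_congr rfl this]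
      exact Finset.sum_le_sum_of_subset_of_nonneg (Finset.subset_univ _)
        (fun i _ _ => abs_nonneg _)
    linarith
  have hsum : l1norm (w - xstar) = ∑ i ∈ S, |w i - xstar i| := by
    rw [l1norm]
    refine (Finset.sum_subset (Finset.subset_univ S) ?_).symm
    intro i _ hi
    simp [Pi.sub_apply, part1 i hi, hxS i hi]
  have hbound : ∀ i ∈ S, |w i - xstar i| ≤ θ₂ + μ * (D - t i) := by
    intro i _
    calc |w i - xstar i| ≤ |w i - v i| + |v i - xstar i| := abs_sub_le _ _ _
      _ ≤ θ₂ + μ * (D - t i) := add_le_add (hwv i) (hkey i)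
  have hsum2 : ∑ i ∈ S, (θ₂ + μ * (D - t i)) = s * θ₂ + μ * (s * D - T) := by
    rw [Finset.sum_add_distrib, Finset.sum_const, nsmul_eq_mul, ← Finset.mul_sum,
      Finset.sum_sub_distrib, Finset.sum_const, nsmul_eq_mul, ← hTdef]
  have hmain : l1norm (w - xstar) ≤ s * θ₂ + μ * (s * D - T) := by
    rw [hsum, ← hsum2]
    refine Finset.sum_le_sum ?_
    intro i hi
    have := hbound i hi
    simpa using this
  have hc' : (s - 1) * c = (N : ℝ) - s := by
    have hs1 : s - 1 ≠ 0 := by linarith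
    rw [hcdef]
    field_simp
  have hstep : s * D - T ≤ (s - 1) * D + ((N : ℝ) - s) * U := by
    nlinarith [mul_nonneg (by linarith : (0:ℝ) ≤ (N:ℝ) - s - 1) hU0]
  have hR : (s - 1) * (D + c * U) = (s - 1) * D + ((N : ℝ) - s) * U := by
    rw [mul_add, ← mul_assoc, hc']
  have hkey2 : μ * (s * D - T) ≤ μ * ((s - 1) * (D + c * U)) := by
    rw [hR]
    exact mul_le_mul_of_nonneg_left hstep hμ0
  rw [hD] at hθ₂ ⊢
  calc l1norm (w - xstar) ≤ s * θ₂ + μ * (s * D - T) := hmain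
    _ ≤ s * (μ * (D + c * U)) + μ * ((s - 1) * (D + c * U)) := by
        rw [hθ₂]; linarith [hkey2]
    _ = μ * (2 * s - 1) * (D + c * U) := by ring
end
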